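/- arXiv:1706.06506 — 2 statements merged into one kernel-verified Lean document; each statement's English description precedes it below -/
import Mathlib

section
/- Let Δ be a simplicial complex admitting a free action by the group G=ℤ/pℤ over a field k extending ℂ. Then for every i ≥ 1 and every j with 0 ≤ j ≤ p−1, dim_k k[Δ]_i^j = (1/p)·dim_k k[Δ]_i; moreover dim_k k[Δ]_0^0 = 1 and dim_k k[Δ]_0^j = 0 for 0 < j < p. -/
/-!
Common framework: abstract simplicial complexes on `Fin n`, their `f`- and `h`-vectors,
(relative) simplicial cohomology with field coefficients, free actions of `ℤ/pℤ` given by a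
permutation `e`, eigen-Betti numbers, Stanley--Reisner ideals and graded/equivariant pieces of
Artinian reductions.
-/

namespace GroupActionsSR

open scoped BigOperators

/-- An abstract simplicial complex on the vertex set `Fin n` (always containing `∅`). -/
structure SC (n : ℕ) where
  faces : Finset (Finset (Fin n))
  empty_mem : ∅ ∈ faces
  down_closed : ∀ σ ∈ faces, ∀ τ ⊆ σ, τ ∈ faces

variable {n : ℕ}

/-- `fnum Δ j` is the number of faces with `j` vertices, i.e. `f_{j-1}(Δ)`. -/
def fnum (Δ : SC n) (j : ℕ) : ℕ := (Δ.faces.filter fun σ => σ.card = j).card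

/-- the `h`-vector of a `(d-1)`-dimensional complex:
`h_i = ∑_{j=0}^i (-1)^{i-j} C(d-j, i-j) f_{j-1}`. -/
def hvec (Δ : SC n) (d i : ℕ) : ℤ :=
  ∑ j ∈ Finset.range (i + 1),
    (-1 : ℤ) ^ (i - j) * ((d - j).choose (i - j) : ℤ) * (fnum Δ j : ℤ)

/-- `Δ` has dimension `d - 1`. -/
def SC.hasDim (Δ : SC n) (d : ℕ) : Prop :=
  (∀ σ ∈ Δ.faces, σ.card ≤ d) ∧ ∃ σ ∈ Δ.faces, σ.card = d

/-- `Δ` is pure of dimension `d-1`. -/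
def SC.Pure (Δ : SC n) (d : ℕ) : Prop :=
  ∀ σ ∈ Δ.faces, ∃ τ ∈ Δ.faces, σ ⊆ τ ∧ τ.card = d

/-- the set of faces of the link of `σ` in `Δ`. -/
def linkF (Δ : SC n) (σ : Finset (Fin n)) : Finset (Finset (Fin n)) :=
  Δ.faces.filter fun τ => Disjoint σ τ ∧ σ ∪ τ ∈ Δ.faces

/-- the set of faces of the star of `σ` in `Δ`. -/
def starF (Δ : SC n) (σ : Finset (Fin n)) : Finset (Finset (Fin n)) :=
  Δ.faces.filter fun τ => σ ∪ τ ∈ Δ.faces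

/-- A free simplicial action of `ℤ/pℤ` on `Δ`, the generator acting by the permutation `e`:
`e^p = 1`, `e` maps faces to faces, and no nonempty face is mapped to itself by a
non-identity power. -/
def FreeActionBy (Δ : SC n) (e : Equiv.Perm (Fin n)) (p : ℕ) : Prop :=
  e ^ p = 1 ∧ (∀ σ ∈ Δ.faces, σ.image ⇑e ∈ Δ.faces) ∧
    ∀ σ ∈ Δ.faces, σ ≠ ∅ → ∀ l : ℕ, 0 < l → l < p → σ.image ⇑(e ^ l) ≠ σ

/-- A very free simplicial action of `ℤ/pℤ` on `Δ`:
`st σ ∩ st (g·σ) = {∅}` for all nonempty faces `σ` and non-identity `g`. -/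
def VeryFreeActionBy (Δ : SC n) (e : Equiv.Perm (Fin n)) (p : ℕ) : Prop :=
  e ^ p = 1 ∧ (∀ σ ∈ Δ.faces, σ.image ⇑e ∈ Δ.faces) ∧
    ∀ σ ∈ Δ.faces, σ ≠ ∅ → ∀ l : ℕ, 0 < l → l < p →
      ∀ τ, τ ∈ starF Δ σ → τ ∈ starF Δ (σ.image ⇑(e ^ l)) → τ = ∅

section Complexes

variable (R : Type*) [CommRing R]

/-- the faces of `F` which contain `S` and have `t` vertices.  These index a basis of the space
of relative simplicial `(t-1)`-cochains of the pair `(F, cost_F S)`. -/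
def RF (F : Finset (Finset (Fin n))) (S : Finset (Fin n)) (t : ℤ) : Type :=
  {σ : Finset (Fin n) // σ ∈ F ∧ S ⊆ σ ∧ (σ.card : ℤ) = t}

/-- the simplicial coboundary map on (relative) cochains. -/
noncomputable def cb (F : Finset (Finset (Fin n))) (S : Finset (Fin n)) (t : ℤ) :
    (RF F S t → R) →ₗ[R] (RF F S (t + 1) → R) where
  toFun f τ := ∑ v ∈ τ.1, (-1 : R) ^ (τ.1.filter (· < v)).card *
      (if h : τ.1.erase v ∈ F ∧ S ⊆ τ.1.erase v ∧ ((τ.1.erase v).card : ℤ) = t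
        then f ⟨τ.1.erase v, h⟩ else 0)
  map_add' f g := by
    funext τ
    simp only [Pi.add_apply]
    rw [← Finset.sum_add_distrib]
    refine Finset.sum_congr rfl fun v _ => ?_
    by_cases h : τ.1.erase v ∈ F ∧ S ⊆ τ.1.erase v ∧ ((τ.1.erase v).card : ℤ) = t
    · simp only [dif_pos h, Pi.add_apply, mul_add]; exact mul_add _ _ _
    · simp only [dif_neg h, mul_zero, add_zero]
  map_smul' c f := by
    funext τ
    simp only [Pi.smul_apply, smul_eq_mul, RingHom.id_apply, Finset.mul_sum]
    refine Finset.sum_congr rfl fun v _ => ?_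
    by_cases h : τ.1.erase v ∈ F ∧ S ⊆ τ.1.erase v ∧ ((τ.1.erase v).card : ℤ) = t
    · simp only [dif_pos h, Pi.smul_apply, smul_eq_mul]; exact mul_left_comm _ _ _
    · simp only [dif_neg h, mul_zero, smul_zero]

/-- the cohomology of a two-step complex `C1 → C2 → C3` at the middle spot. -/
abbrev cohOf {C1 C2 C3 : Type*} [AddCommGroup C1] [AddCommGroup C2] [AddCommGroup C3]
    [Module R C1] [Module R C2] [Module R C3]
    (d1 : C1 →ₗ[R] C2) (d2 : C2 →ₗ[R] C3) : Type _ :=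
  LinearMap.ker d2 ⧸ (LinearMap.range d1).comap (LinearMap.ker d2).subtype

open Classical in
/-- the endomorphism of `cohOf d1 d2` induced by a chain map `φ` at the middle spot
(junk value `0` if `φ` is not compatible with the complex). -/
noncomputable def cohEnd {C1 C2 C3 : Type*} [AddCommGroup C1] [AddCommGroup C2] [AddCommGroup C3]
    [Module R C1] [Module R C2] [Module R C3]
    (d1 : C1 →ₗ[R] C2) (d2 : C2 →ₗ[R] C3) (φ : C2 →ₗ[R] C2) :
    cohOf R d1 d2 →ₗ[R] cohOf R d1 d2 :=
  if h : (∀ x ∈ LinearMap.ker d2, φ x ∈ LinearMap.ker d2) ∧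
      (∀ x ∈ LinearMap.range d1, φ x ∈ LinearMap.range d1) then
    Submodule.mapQ _ _ (φ.restrict h.1)
      (fun x hx => by
        have hx' : (x : C2) ∈ LinearMap.range d1 := hx
        have := h.2 x.1 hx'
        exact this)
  else 0

/-- relative simplicial cohomology `H^t(F, cost_F S)` (living on faces of cardinality `t+1`);
for `S = ∅` this is reduced simplicial cohomology `H̃^t(F)`. -/
noncomputable abbrev cohm (F : Finset (Finset (Fin n))) (S : Finset (Fin n)) (t : ℤ) : Type _ :=
  cohOf R (cb R F S t) (cb R F S (t + 1))

end Complexes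

/-- the reduced Betti number `β_t(F) = dim_k H̃^t(F; k)`. -/
noncomputable def betti (k : Type*) [Field k] (F : Finset (Finset (Fin n))) (t : ℤ) : ℕ :=
  Module.finrank k (cohm k F ∅ t)

/-- `Δ` is Buchsbaum over `k`: it is pure of dimension `d-1` and
`β_i(lk σ) = 0` for all nonempty faces `σ` and all `i < dim lk σ`. -/
def Buchsbaum (k : Type*) [Field k] (Δ : SC n) (d : ℕ) : Prop :=
  Δ.Pure d ∧ ∀ σ ∈ Δ.faces, σ ≠ ∅ →
    ∀ i : ℤ, i < (d : ℤ) - (σ.card : ℤ) - 1 → betti k (linkF Δ σ) i = 0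

/-- the sign of the permutation that `e` induces on the (ordered) vertices of `σ`,
computed as `(-1)^(number of inversions)`. -/
def faceSign (e : Equiv.Perm (Fin n)) (σ : Finset (Fin n)) : ℤ :=
  (-1 : ℤ) ^ ((σ ×ˢ σ).filter fun q => q.1 < q.2 ∧ e q.2 < e q.1).card

/-- the action of the simplicial automorphism `e` on simplicial cochains:
`(e · f)(σ) = ε(e⁻¹, σ) f(e⁻¹ σ)`. -/
noncomputable def cact (k : Type*) [Field k] (e : Equiv.Perm (Fin n))
    (F : Finset (Finset (Fin n))) (S : Finset (Fin n)) (t : ℤ) :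
    (RF F S t → k) →ₗ[k] (RF F S t → k) where
  toFun f σ := faceSign e⁻¹ σ.1 •
      (if h : σ.1.image ⇑e⁻¹ ∈ F ∧ S ⊆ σ.1.image ⇑e⁻¹ ∧ ((σ.1.image ⇑e⁻¹).card : ℤ) = t
        then f ⟨σ.1.image ⇑e⁻¹, h⟩ else 0)
  map_add' f g := by
    funext σ
    simp only [Pi.add_apply]
    by_cases h : σ.1.image ⇑e⁻¹ ∈ F ∧ S ⊆ σ.1.image ⇑e⁻¹ ∧ ((σ.1.image ⇑e⁻¹).card : ℤ) = t
    · simp only [dif_pos h, Pi.add_apply, smul_add]; exact smul_add _ _ _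
    · simp only [dif_neg h, smul_zero, add_zero]
  map_smul' c f := by
    funext σ
    simp only [Pi.smul_apply, RingHom.id_apply]
    by_cases h : σ.1.image ⇑e⁻¹ ∈ F ∧ S ⊆ σ.1.image ⇑e⁻¹ ∧ ((σ.1.image ⇑e⁻¹).card : ℤ) = t
    · simp only [dif_pos h, Pi.smul_apply]
      rw [smul_comm]; rfl
    · simp only [dif_neg h, smul_zero]

/-- the dimension of the `μ`-eigenspace of `f`. -/
noncomputable def eigenDim (k : Type*) [Field k] {M : Type*} [AddCommGroup M] [Module k M]
    (f : M →ₗ[k] M) (μ : k) : ℕ :=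
  Module.finrank k (LinearMap.ker (f - μ • LinearMap.id))

/-- the action induced by `e` on reduced simplicial cohomology `H̃^t(F; k)`. -/
noncomputable def cohAction (k : Type*) [Field k] (e : Equiv.Perm (Fin n))
    (F : Finset (Finset (Fin n))) (t : ℤ) : cohm k F ∅ t →ₗ[k] cohm k F ∅ t :=
  cohEnd k (cb k F ∅ t) (cb k F ∅ (t + 1)) (cact k e F ∅ (t + 1))

/-- the refined Betti number `β_t(F)^μ`: the dimension of the `μ`-eigenspace of the action of
the generator `e` on `H̃^t(F; k)`. -/
noncomputable def bettiEig (k : Type*) [Field k] (e : Equiv.Perm (Fin n))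
    (F : Finset (Finset (Fin n))) (t : ℤ) (μ : k) : ℕ :=
  eigenDim k (cohAction k e F t) μ

section Ring

variable (k : Type*) [Field k]

/-- the Stanley--Reisner ideal of `Δ` in `A = k[x_1, …, x_n]`. -/
noncomputable def SRIdeal (Δ : SC n) : Ideal (MvPolynomial (Fin n) k) :=
  Ideal.span {f | ∃ σ : Finset (Fin n), σ ∉ Δ.faces ∧ f = ∏ i ∈ σ, MvPolynomial.X i}

/-- the dimension of the `(i, μ)`-component of `A ⧸ K`: the image of the homogeneous
degree-`i` polynomials `f` with `(rename e) f ≡ μ • f (mod K)`, i.e. the `μ`-eigenspace of the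
degree-`i` part of `A ⧸ K` for the action induced by the permutation `e` of the variables. -/
noncomputable def pieceDim (K : Ideal (MvPolynomial (Fin n) k)) (e : Equiv.Perm (Fin n))
    (i : ℕ) (μ : k) : ℕ :=
  Module.finrank k (Submodule.map (Ideal.Quotient.mkₐ k K).toLinearMap
    ((MvPolynomial.homogeneousSubmodule (Fin n) k i) ⊓
      Submodule.comap
        (((MvPolynomial.rename ⇑e :
            MvPolynomial (Fin n) k →ₐ[k] MvPolynomial (Fin n) k).toLinearMap
          - μ • LinearMap.id : MvPolynomial (Fin n) k →ₗ[k] MvPolynomial (Fin n) k))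
        (Submodule.restrictScalars k K)))

/-- the dimension of the full degree-`i` component of `A ⧸ K`. -/
noncomputable def pieceDimTot (K : Ideal (MvPolynomial (Fin n) k)) (i : ℕ) : ℕ :=
  Module.finrank k (Submodule.map (Ideal.Quotient.mkₐ k K).toLinearMap
    (MvPolynomial.homogeneousSubmodule (Fin n) k i))

set_option synthInstance.maxHeartbeats 1000000 in
/-- the preimage in `A` of the sigma module
`Σ(Θ; k[Δ]) = Θk[Δ] + ∑ᵢ ((θ_1, …, θ̂_i, …, θ_d)k[Δ] :_{k[Δ]} θ_i) ⊆ k[Δ]`. -/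
noncomputable def sigmaIdealA (Δ : SC n) {d : ℕ} (Θ : Fin d → MvPolynomial (Fin n) k) :
    Ideal (MvPolynomial (Fin n) k) :=
  Ideal.comap (Ideal.Quotient.mk (SRIdeal k Δ))
    (Ideal.span (Set.range fun i => Ideal.Quotient.mk (SRIdeal k Δ) (Θ i)) ⊔
      ⨆ i : Fin d,
        Submodule.colon
          (Ideal.span ((fun i' => Ideal.Quotient.mk (SRIdeal k Δ) (Θ i')) '' {i' | i' ≠ i}))
          (Ideal.span {Ideal.Quotient.mk (SRIdeal k Δ) (Θ i)}))

/-- `Θ` is a linear system of parameters for `k[Δ]`: it consists of linear forms and the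
Artinian reduction `k[Δ]/Θk[Δ] = A/(I_Δ + (Θ))` is finite-dimensional over `k`. -/
def IsLsop (Δ : SC n) {d : ℕ} (Θ : Fin d → MvPolynomial (Fin n) k) : Prop :=
  (∀ i, Θ i ∈ MvPolynomial.homogeneousSubmodule (Fin n) k 1) ∧
  FiniteDimensional k (MvPolynomial (Fin n) k ⧸ (SRIdeal k Δ ⊔ Ideal.span (Set.range Θ)))

end Ring


section Extras

/-- the basis of the direct sum, over all `U ∈ ℕⁿ` with `supp U ∈ Δ` and `|U| = j`, of the
relative simplicial cochains `C^{t-1}(Δ, cost_Δ s(U))`: pairs `(U, σ)` with `σ ∈ Δ`,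
`s(U) ⊆ σ`, `|U| = j`, `#σ = t`. -/
def RT (Δ : SC n) (j : ℕ) (t : ℤ) : Type :=
  {x : (Fin n → ℕ) × Finset (Fin n) //
    x.2 ∈ Δ.faces ∧ (Finset.univ.filter fun i => x.1 i ≠ 0) ⊆ x.2 ∧
      (∑ i, x.1 i) = j ∧ ((x.2.card : ℤ)) = t}

variable (k : Type*) [Field k]

/-- the simplicial coboundary map on `⊕_{U ∈ T(Δ)_j} C^{t-1}(Δ, cost_Δ s(U))`. -/
noncomputable def rtd (Δ : SC n) (j : ℕ) (t : ℤ) :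
    (RT Δ j t → k) →ₗ[k] (RT Δ j (t + 1) → k) where
  toFun f x := ∑ v ∈ x.1.2, (-1 : k) ^ (x.1.2.filter (· < v)).card *
      (if h : x.1.2.erase v ∈ Δ.faces ∧
          (Finset.univ.filter fun i => x.1.1 i ≠ 0) ⊆ x.1.2.erase v ∧
          (∑ i, x.1.1 i) = j ∧ (((x.1.2.erase v).card : ℤ)) = t
        then f ⟨(x.1.1, x.1.2.erase v), h⟩ else 0)
  map_add' f g := by
    funext x
    simp only [Pi.add_apply]
    rw [← Finset.sum_add_distrib]
    refine Finset.sum_congr rfl fun v _ => ?_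
    by_cases h : x.1.2.erase v ∈ Δ.faces ∧
        (Finset.univ.filter fun i => x.1.1 i ≠ 0) ⊆ x.1.2.erase v ∧
        (∑ i, x.1.1 i) = j ∧ (((x.1.2.erase v).card : ℤ)) = t
    · simp only [dif_pos h, Pi.add_apply, mul_add]; exact mul_add _ _ _
    · simp only [dif_neg h, mul_zero, add_zero]
  map_smul' c f := by
    funext x
    simp only [Pi.smul_apply, smul_eq_mul, RingHom.id_apply, Finset.mul_sum]
    refine Finset.sum_congr rfl fun v _ => ?_
    by_cases h : x.1.2.erase v ∈ Δ.faces ∧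
        (Finset.univ.filter fun i => x.1.1 i ≠ 0) ⊆ x.1.2.erase v ∧
        (∑ i, x.1.1 i) = j ∧ (((x.1.2.erase v).card : ℤ)) = t
    · simp only [dif_pos h, Pi.smul_apply, smul_eq_mul]; exact mul_left_comm _ _ _
    · simp only [dif_neg h, mul_zero, smul_zero]

/-- the action of a simplicial automorphism `g` of `Δ` on
`⊕_{U ∈ T(Δ)_j} C^{t-1}(Δ, cost_Δ s(U))`:  `(g · f)(U, σ) = ± f(g⁻¹ · U, g⁻¹ · σ)`. -/
noncomputable def rtact (Δ : SC n) (j : ℕ) (t : ℤ) (g : Equiv.Perm (Fin n)) :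
    (RT Δ j t → k) →ₗ[k] (RT Δ j t → k) where
  toFun f x := faceSign g⁻¹ x.1.2 •
      (if h : x.1.2.image ⇑g⁻¹ ∈ Δ.faces ∧
          (Finset.univ.filter fun i => (x.1.1 ∘ ⇑g) i ≠ 0) ⊆ x.1.2.image ⇑g⁻¹ ∧
          (∑ i, (x.1.1 ∘ ⇑g) i) = j ∧ (((x.1.2.image ⇑g⁻¹).card : ℤ)) = t
        then f ⟨(x.1.1 ∘ ⇑g, x.1.2.image ⇑g⁻¹), h⟩ else 0)
  map_add' f g' := by
    funext x
    simp only [Pi.add_apply]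
    by_cases h : x.1.2.image ⇑g⁻¹ ∈ Δ.faces ∧
        (Finset.univ.filter fun i => (x.1.1 ∘ ⇑g) i ≠ 0) ⊆ x.1.2.image ⇑g⁻¹ ∧
        (∑ i, (x.1.1 ∘ ⇑g) i) = j ∧ (((x.1.2.image ⇑g⁻¹).card : ℤ)) = t
    · simp only [dif_pos h, Pi.add_apply, smul_add]; exact smul_add _ _ _
    · simp only [dif_neg h, smul_zero, add_zero]
  map_smul' c f := by
    funext x
    simp only [Pi.smul_apply, RingHom.id_apply]
    by_cases h : x.1.2.image ⇑g⁻¹ ∈ Δ.faces ∧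
        (Finset.univ.filter fun i => (x.1.1 ∘ ⇑g) i ≠ 0) ⊆ x.1.2.image ⇑g⁻¹ ∧
        (∑ i, (x.1.1 ∘ ⇑g) i) = j ∧ (((x.1.2.image ⇑g⁻¹).card : ℤ)) = t
    · simp only [dif_pos h, Pi.smul_apply]
      rw [smul_comm]; rfl
    · simp only [dif_neg h, smul_zero]

/-- the basis of `Hom_A(K_t, k[Δ])_{-j}` where `K_•` is the Koszul complex on
`x_1^{j+1}, …, x_n^{j+1}`: pairs `(σ, V)` where `#σ = t` and `x^V` is a monomial of `k[Δ]` of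
degree `(j+1)t - j`. -/
def KT (Δ : SC n) (j : ℕ) (t : ℤ) : Type :=
  {x : Finset (Fin n) × (Fin n → ℕ) //
    ((x.1.card : ℤ) = t) ∧ (Finset.univ.filter fun i => x.2 i ≠ 0) ∈ Δ.faces ∧
      ((∑ i, x.2 i : ℕ) : ℤ) = (j + 1) * t - j}

/-- the differential of the complex `Hom_A(K_•, k[Δ])_{-j}`, whose `i`-th cohomology is the
graded piece `H_𝔪^i(k[Δ])_{-j}` of local cohomology. -/
noncomputable def ktd (Δ : SC n) (j : ℕ) (t : ℤ) :
    (KT Δ j t → k) →ₗ[k] (KT Δ j (t + 1) → k) where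
  toFun f x := ∑ v ∈ x.1.1, (-1 : k) ^ (x.1.1.filter (· < v)).card *
      (if h : j + 1 ≤ x.1.2 v ∧ (((x.1.1.erase v).card : ℤ) = t) ∧
          (Finset.univ.filter fun i => (fun i' => x.1.2 i' - if i' = v then j + 1 else 0) i ≠ 0)
            ∈ Δ.faces ∧
          ((∑ i, (fun i' => x.1.2 i' - if i' = v then j + 1 else 0) i : ℕ) : ℤ) = (j + 1) * t - j
        then f ⟨(x.1.1.erase v, fun i' => x.1.2 i' - if i' = v then j + 1 else 0), h.2⟩ else 0)
  map_add' f g := by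
    funext x
    simp only [Pi.add_apply]
    rw [← Finset.sum_add_distrib]
    refine Finset.sum_congr rfl fun v _ => ?_
    by_cases h : j + 1 ≤ x.1.2 v ∧ (((x.1.1.erase v).card : ℤ) = t) ∧
        (Finset.univ.filter fun i => (fun i' => x.1.2 i' - if i' = v then j + 1 else 0) i ≠ 0)
          ∈ Δ.faces ∧
        ((∑ i, (fun i' => x.1.2 i' - if i' = v then j + 1 else 0) i : ℕ) : ℤ) = (j + 1) * t - j
    · simp only [dif_pos h, Pi.add_apply, mul_add]; exact mul_add _ _ _
    · simp only [dif_neg h, mul_zero, add_zero]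
  map_smul' c f := by
    funext x
    simp only [Pi.smul_apply, smul_eq_mul, RingHom.id_apply, Finset.mul_sum]
    refine Finset.sum_congr rfl fun v _ => ?_
    by_cases h : j + 1 ≤ x.1.2 v ∧ (((x.1.1.erase v).card : ℤ) = t) ∧
        (Finset.univ.filter fun i => (fun i' => x.1.2 i' - if i' = v then j + 1 else 0) i ≠ 0)
          ∈ Δ.faces ∧
        ((∑ i, (fun i' => x.1.2 i' - if i' = v then j + 1 else 0) i : ℕ) : ℤ) = (j + 1) * t - j
    · simp only [dif_pos h, Pi.smul_apply, smul_eq_mul]; exact mul_left_comm _ _ _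
    · simp only [dif_neg h, mul_zero, smul_zero]

/-- the action of a simplicial automorphism `g` of `Δ` on `Hom_A(K_t, k[Δ])_{-j}`. -/
noncomputable def ktact (Δ : SC n) (j : ℕ) (t : ℤ) (g : Equiv.Perm (Fin n)) :
    (KT Δ j t → k) →ₗ[k] (KT Δ j t → k) where
  toFun f x := faceSign g⁻¹ x.1.1 •
      (if h : ((x.1.1.image ⇑g⁻¹).card : ℤ) = t ∧
          (Finset.univ.filter fun i => (x.1.2 ∘ ⇑g) i ≠ 0) ∈ Δ.faces ∧
          ((∑ i, (x.1.2 ∘ ⇑g) i : ℕ) : ℤ) = (j + 1) * t - j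
        then f ⟨(x.1.1.image ⇑g⁻¹, x.1.2 ∘ ⇑g), h⟩ else 0)
  map_add' f g' := by
    funext x
    simp only [Pi.add_apply]
    by_cases h : ((x.1.1.image ⇑g⁻¹).card : ℤ) = t ∧
        (Finset.univ.filter fun i => (x.1.2 ∘ ⇑g) i ≠ 0) ∈ Δ.faces ∧
        ((∑ i, (x.1.2 ∘ ⇑g) i : ℕ) : ℤ) = (j + 1) * t - j
    · simp only [dif_pos h, Pi.add_apply, smul_add]; exact smul_add _ _ _
    · simp only [dif_neg h, smul_zero, add_zero]
  map_smul' c f := by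
    funext x
    simp only [Pi.smul_apply, RingHom.id_apply]
    by_cases h : ((x.1.1.image ⇑g⁻¹).card : ℤ) = t ∧
        (Finset.univ.filter fun i => (x.1.2 ∘ ⇑g) i ≠ 0) ∈ Δ.faces ∧
        ((∑ i, (x.1.2 ∘ ⇑g) i : ℕ) : ℤ) = (j + 1) * t - j
    · simp only [dif_pos h, Pi.smul_apply]
      rw [smul_comm]; rfl
    · simp only [dif_neg h, smul_zero]

/-- the isotypic component `N^χ = {m : M | g • m = χ(g) • m for all g}` of a family of
linear endomorphisms indexed by `G`. -/
noncomputable def isotyp {M : Type*} [AddCommGroup M] [Module k M]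
    {G : Type*} (act : G → (M →ₗ[k] M)) (χ : G → k) : Submodule k M :=
  ⨅ g : G, LinearMap.ker (act g - χ g • LinearMap.id)

/-- the simplicial boundary map on (reduced) simplicial chains with integer coefficients. -/
noncomputable def bd (F : Finset (Finset (Fin n))) (t : ℤ) :
    (RF F ∅ (t + 1) → ℤ) →ₗ[ℤ] (RF F ∅ t → ℤ) where
  toFun c σ := ∑ v ∈ Finset.univ \ σ.1, (-1 : ℤ) ^ (σ.1.filter (· < v)).card *
      (if h : insert v σ.1 ∈ F ∧ (∅ : Finset (Fin n)) ⊆ insert v σ.1 ∧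
          (((insert v σ.1).card : ℤ)) = t + 1
        then c ⟨insert v σ.1, h⟩ else 0)
  map_add' c c' := by
    funext σ
    simp only [Pi.add_apply]
    rw [← Finset.sum_add_distrib]
    refine Finset.sum_congr rfl fun v _ => ?_
    by_cases h : insert v σ.1 ∈ F ∧ (∅ : Finset (Fin n)) ⊆ insert v σ.1 ∧
        (((insert v σ.1).card : ℤ)) = t + 1
    · simp only [dif_pos h, Pi.add_apply, mul_add]; exact mul_add _ _ _
    · simp only [dif_neg h, mul_zero, add_zero]
  map_smul' a c := by
    funext σ
    simp only [Pi.smul_apply, smul_eq_mul, RingHom.id_apply, Finset.mul_sum]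
    refine Finset.sum_congr rfl fun v _ => ?_
    by_cases h : insert v σ.1 ∈ F ∧ (∅ : Finset (Fin n)) ⊆ insert v σ.1 ∧
        (((insert v σ.1).card : ℤ)) = t + 1
    · simp only [dif_pos h, Pi.smul_apply, smul_eq_mul]; exact mul_left_comm _ _ _
    · simp only [dif_neg h, mul_zero, smul_zero]

/-- reduced simplicial homology `H̃_t(F; ℤ)` with integer coefficients. -/
noncomputable abbrev homologyZ (F : Finset (Finset (Fin n))) (t : ℤ) : Type _ :=
  cohOf ℤ (bd F (t + 1)) (bd F t)

/-- the geometric realization `|Δ| ⊆ ℝⁿ` of `Δ`. -/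
noncomputable def geomReal (Δ : SC n) : Set (Fin n → ℝ) :=
  {x | (∀ i, 0 ≤ x i) ∧ ∑ i, x i = 1 ∧ (Finset.univ.filter fun i => x i ≠ 0) ∈ Δ.faces}

end Extras

/-!
In degree `i`, `k[Δ]` has the basis of monomials `x^U` with `supp U ∈ Δ` and `|U| = i`, and the
generator `g` permutes this basis, so the `ζ^j`-eigenspace of `g` on `k[Δ]_i` is that of a
permutation operator `T` with `T^p = 1`. Since `(1/p) ∑_l ζ^{-jl} T^l` projects onto it, its
dimension is `(1/p) ∑_l ζ^{-jl} tr(T^l)`, and `tr(T^l)` counts the monomials fixed by `g^l`. For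
`i ≥ 1` such a monomial has a nonempty support fixed by `g^l`, so freeness leaves only the term
`l = 0`, which is `dim k[Δ]_i`. In degree `0` the only monomial is `1`, fixed by `g`.
-/

open MvPolynomial Finset

section EigenspaceDimension

open Module LinearMap

variable {k V : Type*} [Field k] [AddCommGroup V] [Module k V]

theorem sum_range_shift_of_apply_eq {M : Type*} [AddCommGroup M] {g : ℕ → M} {p : ℕ}
    (hg : g p = g 0) : ∑ l ∈ range p, g (l + 1) = ∑ l ∈ range p, g l := by
  have h := (sum_range_succ' g p).symm.trans (sum_range_succ g p)
  rwa [hg, add_left_inj] at h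

theorem isProj_eigenspace_average {T : Module.End k V} {p : ℕ} {μ : k} (hT : T ^ p = 1)
    (hμ : μ ^ p = 1) (hp : (p : k) ≠ 0) :
    IsProj (T.eigenspace μ) ((p : k)⁻¹ • ∑ l ∈ range p, μ⁻¹ ^ l • T ^ l) := by
  have hμ0 : μ ≠ 0 := by rintro rfl; simp_all [zero_pow_eq]
  have hTP : T * ∑ l ∈ range p, μ⁻¹ ^ l • T ^ l = μ • ∑ l ∈ range p, μ⁻¹ ^ l • T ^ l :=
    calc T * ∑ l ∈ range p, μ⁻¹ ^ l • T ^ l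
        = μ • ∑ l ∈ range p, μ⁻¹ ^ (l + 1) • T ^ (l + 1) := by
          rw [mul_sum, smul_sum]
          refine sum_congr rfl fun l _ => ?_
          rw [mul_smul_comm, ← pow_succ', smul_smul, pow_succ' μ⁻¹, ← mul_assoc,
            mul_inv_cancel₀ hμ0, one_mul]
      _ = μ • ∑ l ∈ range p, μ⁻¹ ^ l • T ^ l := by
          rw [sum_range_shift_of_apply_eq (g := fun l => μ⁻¹ ^ l • T ^ l) (by simp [hT, hμ])]
  have hpow : ∀ v ∈ T.eigenspace μ, ∀ l : ℕ, (T ^ l) v = μ ^ l • v := by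
    intro v hv l
    rw [Module.End.mem_eigenspace_iff] at hv
    induction l with
    | zero => simp
    | succ l ih => rw [pow_succ', Module.End.mul_apply, ih, map_smul, hv, smul_smul, ← pow_succ]
  constructor
  · intro v
    rw [Module.End.mem_eigenspace_iff, LinearMap.smul_apply, map_smul, ← Module.End.mul_apply,
      hTP, LinearMap.smul_apply, smul_comm]
  · intro v hv
    simp_rw [LinearMap.smul_apply, LinearMap.sum_apply, LinearMap.smul_apply, hpow v hv,
      smul_smul, ← mul_pow, inv_mul_cancel₀ hμ0, one_pow, one_smul, sum_const, card_range,
      ← Nat.cast_smul_eq_nsmul k, smul_smul, inv_mul_cancel₀ hp, one_smul]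

theorem natCast_mul_finrank_eigenspace [FiniteDimensional k V] {T : Module.End k V} {p : ℕ}
    {μ : k} (hT : T ^ p = 1) (hμ : μ ^ p = 1) (hp : (p : k) ≠ 0) :
    (p : k) * finrank k (T.eigenspace μ) = ∑ l ∈ range p, μ⁻¹ ^ l * trace k V (T ^ l) := by
  rw [← (isProj_eigenspace_average hT hμ hp).trace, map_smul, map_sum, smul_eq_mul,
    ← mul_assoc, mul_inv_cancel₀ hp, one_mul]
  simp_rw [map_smul, smul_eq_mul]

end EigenspaceDimension

section PermutationOperator

open LinearMap

variable {k S : Type*} [Field k]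

theorem trace_funLeft_perm [Fintype S] [DecidableEq S] (σ : Equiv.Perm S) :
    trace k (S → k) (funLeft k k σ) = #{s | σ s = s} := by
  rw [trace_eq_matrix_trace k (Pi.basisFun k S), Matrix.trace]
  simp [Pi.single_apply]

theorem funLeft_perm_pow (σ : Equiv.Perm S) (l : ℕ) :
    funLeft k k ⇑σ ^ l = funLeft k k ⇑(σ ^ l) := by
  induction l with
  | zero => rfl
  | succ l ih => rw [pow_succ, ih, pow_succ', Equiv.Perm.coe_mul, funLeft_comp]; rfl

end PermutationOperator

section ModuleQuotient

variable {R W M N : Type*} [Semiring R] [AddCommMonoid W] [AddCommMonoid M] [AddCommMonoid N]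
  [Module R W] [Module R M] [Module R N] {π : M →ₗ[R] N} {Φ : W →ₗ[R] M} {H : Submodule R M}

theorem map_eq_range_comp_of_le_sup_ker (hΦH : LinearMap.range Φ ≤ H)
    (hH : H ≤ LinearMap.range Φ ⊔ LinearMap.ker π) : H.map π = LinearMap.range (π ∘ₗ Φ) := by
  refine le_antisymm ?_ ?_
  · rintro _ ⟨f, hf, rfl⟩
    obtain ⟨_, ⟨c, rfl⟩, m, hm, rfl⟩ := Submodule.mem_sup.mp (hH hf)
    exact ⟨c, by simp [LinearMap.mem_ker.mp hm]⟩
  · rw [LinearMap.range_comp]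
    exact Submodule.map_mono hΦH

theorem map_inf_comap_ker_eq_map_ker {L : M →ₗ[R] M} {T : W →ₗ[R] W}
    (hΦH : LinearMap.range Φ ≤ H) (hH : H ≤ LinearMap.range Φ ⊔ LinearMap.ker π)
    (hL : LinearMap.ker π ≤ (LinearMap.ker π).comap L) (hLΦ : L ∘ₗ Φ = Φ ∘ₗ T)
    (hinj : Function.Injective (π ∘ₗ Φ)) :
    (H ⊓ (LinearMap.ker π).comap L).map π = (LinearMap.ker T).map (π ∘ₗ Φ) := by
  refine le_antisymm ?_ ?_
  · rintro _ ⟨f, ⟨hf, hLf⟩, rfl⟩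
    obtain ⟨_, ⟨c, rfl⟩, m, hm, rfl⟩ := Submodule.mem_sup.mp (hH hf)
    have hLf : π (L (Φ c + m)) = 0 := hLf
    have hLm : π (L m) = 0 := hL hm
    have hTc : π (Φ (T c)) = 0 := by
      rw [← LinearMap.comp_apply Φ T, ← hLΦ, LinearMap.comp_apply]
      simpa [hLm] using hLf
    refine ⟨c, (map_eq_zero_iff _ hinj).mp hTc, ?_⟩
    simp [LinearMap.mem_ker.mp hm]
  · rintro _ ⟨c, hc, rfl⟩
    refine ⟨Φ c, ⟨hΦH ⟨c, rfl⟩, show π (L (Φ c)) = 0 from ?_⟩, rfl⟩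
    rw [← LinearMap.comp_apply L Φ, hLΦ, LinearMap.comp_apply, LinearMap.mem_ker.mp hc, map_zero,
      map_zero]

end ModuleQuotient

section StanleyReisner

variable {k : Type*} [Field k] (Δ : SC n)

def faceMonomials (i : ℕ) : Finset (Fin n →₀ ℕ) :=
  {U ∈ univ.finsuppAntidiag i | U.support ∈ Δ.faces}

variable {Δ} in
theorem mem_faceMonomials {i : ℕ} {U : Fin n →₀ ℕ} :
    U ∈ faceMonomials Δ i ↔ U.support ∈ Δ.faces ∧ U.degree = i := by
  simp [faceMonomials, Finsupp.degree_eq_sum, and_comm]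

theorem sum_single_one_le_iff (σ : Finset (Fin n)) (U : Fin n →₀ ℕ) :
    ∑ j ∈ σ, Finsupp.single j 1 ≤ U ↔ σ ⊆ U.support := by
  simp only [Finsupp.le_def, Finsupp.coe_finsetSum, Finset.sum_apply, Finsupp.single_apply,
    Finset.sum_ite_eq', subset_iff, Finsupp.mem_support_iff]
  refine forall_congr' fun j => ?_
  split_ifs with hj <;> simp [hj, Nat.one_le_iff_ne_zero]

theorem mem_SRIdeal_iff {f : MvPolynomial (Fin n) k} :
    f ∈ SRIdeal k Δ ↔ ∀ U ∈ f.support, U.support ∉ Δ.faces := by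
  have hgen : SRIdeal k Δ = Ideal.span ((fun U => monomial U (1 : k)) ''
      ((fun σ => ∑ j ∈ σ, Finsupp.single j 1) '' {σ | σ ∉ Δ.faces})) := by
    rw [SRIdeal, Set.image_image]
    congr 1
    ext f
    simp [monomial_sum_one, X, eq_comm]
  rw [hgen, mem_ideal_span_monomial_image]
  refine forall₂_congr fun U _ => ?_
  simp only [Set.mem_image, Set.mem_ofPred_eq, exists_exists_and_eq_and, sum_single_one_le_iff]
  exact ⟨fun ⟨σ, hσ, hσU⟩ hU => hσ (Δ.down_closed _ hU σ hσU), fun hU => ⟨_, hU, subset_rfl⟩⟩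

variable {Δ} {e : Equiv.Perm (Fin n)} (he : ∀ σ ∈ Δ.faces, σ.image ⇑e ∈ Δ.faces)

include he in
theorem image_mem_faces_iff {σ : Finset (Fin n)} : σ.image ⇑e ∈ Δ.faces ↔ σ ∈ Δ.faces := by
  refine ⟨fun h => ?_, he σ⟩
  have hmaps : ∀ τ ∈ Δ.faces, Equiv.finsetCongr e τ ∈ Δ.faces := fun τ hτ => by
    simpa [Finset.map_eq_image] using he τ hτ
  simpa [Finset.map_eq_image, Finset.image_image] using
    Equiv.Perm.perm_symm_on_of_perm_on_finite (p := (· ∈ Δ.faces)) hmaps h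

include he in
theorem rename_mem_SRIdeal {f : MvPolynomial (Fin n) k} (hf : f ∈ SRIdeal k Δ) :
    rename ⇑e f ∈ SRIdeal k Δ := by
  rw [mem_SRIdeal_iff] at hf ⊢
  intro U hU
  rw [support_rename_of_injective e.injective] at hU
  obtain ⟨V, hV, rfl⟩ := Finset.mem_image.mp hU
  rw [Finsupp.mapDomain_support_of_injective e.injective, image_mem_faces_iff he]
  exact hf V hV

include he in
theorem mapDomain_mem_faceMonomials {i : ℕ} {U : Fin n →₀ ℕ} (hU : U ∈ faceMonomials Δ i) :
    U.mapDomain e ∈ faceMonomials Δ i := by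
  rw [mem_faceMonomials, Finsupp.mapDomain_support_of_injective e.injective,
    Finsupp.degree_mapDomain] at *
  exact ⟨he _ hU.1, hU.2⟩

def faceMonomialPerm (i : ℕ) : Equiv.Perm (faceMonomials Δ i) :=
  Equiv.Perm.subtypePermOfFintype (Finsupp.equivCongrLeft e : Equiv.Perm (Fin n →₀ ℕ))
    fun U hU => by
      rw [Finsupp.equivCongrLeft_apply, Finsupp.equivMapDomain_eq_mapDomain]
      exact mapDomain_mem_faceMonomials he hU

theorem coe_faceMonomialPerm_apply {i : ℕ} (U : faceMonomials Δ i) :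
    (faceMonomialPerm he i U : Fin n →₀ ℕ) = (U : Fin n →₀ ℕ).mapDomain e :=
  Finsupp.equivMapDomain_eq_mapDomain e (U : Fin n →₀ ℕ)

theorem coe_faceMonomialPerm_pow_apply (i l : ℕ) (U : faceMonomials Δ i) :
    ((faceMonomialPerm he i ^ l) U : Fin n →₀ ℕ) = (U : Fin n →₀ ℕ).mapDomain ⇑(e ^ l) := by
  induction l with
  | zero => simp
  | succ l ih =>
    rw [pow_succ', Equiv.Perm.mul_apply, coe_faceMonomialPerm_apply, ih, ← Finsupp.mapDomain_comp,
      pow_succ', Equiv.Perm.coe_mul]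

theorem faceMonomialPerm_pow_eq_one {p : ℕ} (hep : e ^ p = 1) (i : ℕ) :
    faceMonomialPerm he i ^ p = 1 := by
  ext U : 2
  simp [coe_faceMonomialPerm_pow_apply, hep]

theorem faceMonomialPerm_pow_apply_ne {p : ℕ} (hfree : FreeActionBy Δ e p) {i : ℕ} (hi : 1 ≤ i)
    {l : ℕ} (hl0 : 0 < l) (hlp : l < p) (U : faceMonomials Δ i) :
    (faceMonomialPerm hfree.2.1 i ^ l) U ≠ U := by
  intro hU
  have hface := mem_faceMonomials.mp U.2
  have hsupp := congrArg (fun V : faceMonomials Δ i => (V : Fin n →₀ ℕ).support) hU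
  simp only [coe_faceMonomialPerm_pow_apply,
    Finsupp.mapDomain_support_of_injective (e ^ l).injective] at hsupp
  refine hfree.2.2 _ hface.1 ?_ l hl0 hlp hsupp
  rintro hempty
  rw [Finsupp.support_eq_empty.mp hempty, map_zero] at hface
  omega

variable (k Δ) in
noncomputable def faceMonomialSum (i : ℕ) : (faceMonomials Δ i → k) →ₗ[k] MvPolynomial (Fin n) k :=
  Fintype.linearCombination k fun U => monomial (U : Fin n →₀ ℕ) 1

theorem coeff_faceMonomialSum {i : ℕ} (c : faceMonomials Δ i → k) (V : Fin n →₀ ℕ) :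
    coeff V (faceMonomialSum k Δ i c) = if h : V ∈ faceMonomials Δ i then c ⟨V, h⟩ else 0 := by
  simp only [faceMonomialSum, Fintype.linearCombination_apply, coeff_sum, coeff_smul,
    coeff_monomial, smul_eq_mul, mul_ite, mul_one, mul_zero]
  split_ifs with h
  · rw [Fintype.sum_eq_single ⟨V, h⟩ fun U hU => if_neg fun hUV => hU (Subtype.ext hUV)]
    exact if_pos rfl
  · exact sum_eq_zero fun U _ => if_neg fun hUV : (U : Fin n →₀ ℕ) = V => h (hUV ▸ U.2)

theorem range_faceMonomialSum_le (i : ℕ) :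
    LinearMap.range (faceMonomialSum k Δ i) ≤ homogeneousSubmodule (Fin n) k i := by
  rintro _ ⟨c, rfl⟩
  exact sum_mem fun U _ => Submodule.smul_mem _ _
    (isHomogeneous_monomial _ (mem_faceMonomials.mp U.2).2)

theorem ker_mkₐ_toLinearMap (I : Ideal (MvPolynomial (Fin n) k)) :
    LinearMap.ker (Ideal.Quotient.mkₐ k I).toLinearMap = I.restrictScalars k := by
  ext f
  simp [Ideal.Quotient.eq_zero_iff_mem]

theorem homogeneousSubmodule_le_range_faceMonomialSum_sup (i : ℕ) :
    homogeneousSubmodule (Fin n) k i ≤ LinearMap.range (faceMonomialSum k Δ i) ⊔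
      LinearMap.ker (Ideal.Quotient.mkₐ k (SRIdeal k Δ)).toLinearMap := by
  intro f hf
  set c : faceMonomials Δ i → k := fun U => coeff U f
  have hrest : f - faceMonomialSum k Δ i c ∈ SRIdeal k Δ := by
    rw [mem_SRIdeal_iff]
    intro V hV hface
    rw [mem_support_iff, coeff_sub, coeff_faceMonomialSum] at hV
    split_ifs at hV with hVi
    · exact hV (sub_self _)
    · rw [sub_zero] at hV
      exact hVi (mem_faceMonomials.mpr ⟨hface, not_not.mp (hf.coeff_eq_zero.mt hV)⟩)
  refine Submodule.mem_sup.mpr ⟨_, ⟨c, rfl⟩, _, ?_, add_sub_cancel _ f⟩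
  rwa [ker_mkₐ_toLinearMap]

theorem injective_mkₐ_comp_faceMonomialSum (i : ℕ) :
    Function.Injective
      ((Ideal.Quotient.mkₐ k (SRIdeal k Δ)).toLinearMap ∘ₗ faceMonomialSum k Δ i) := by
  rw [← LinearMap.ker_eq_bot, LinearMap.ker_comp, ker_mkₐ_toLinearMap, eq_bot_iff]
  intro c hc
  funext U
  by_contra hU
  have hcoeff : coeff U.1 (faceMonomialSum k Δ i c) = c U := by
    rw [coeff_faceMonomialSum, dif_pos U.2]
  exact (mem_SRIdeal_iff Δ).mp hc U.1 (mem_support_iff.mpr (hcoeff ▸ hU))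
    (mem_faceMonomials.mp U.2).1

theorem rename_comp_faceMonomialSum (i : ℕ) :
    (rename ⇑e).toLinearMap ∘ₗ faceMonomialSum k Δ i =
      faceMonomialSum k Δ i ∘ₗ LinearMap.funLeft k k ⇑(faceMonomialPerm he i)⁻¹ := by
  refine LinearMap.ext fun c => ?_
  simp only [LinearMap.comp_apply, AlgHom.toLinearMap_apply, faceMonomialSum,
    Fintype.linearCombination_apply, map_sum, map_smul, rename_monomial, LinearMap.funLeft_apply]
  refine Fintype.sum_equiv (faceMonomialPerm he i) _ _ fun U => ?_
  rw [Equiv.Perm.inv_eq_iff_eq.mpr rfl, coe_faceMonomialPerm_apply]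

theorem pieceDim_eq_finrank_eigenspace (i : ℕ) (μ : k) :
    pieceDim k (SRIdeal k Δ) e i μ =
      Module.finrank k
        (Module.End.eigenspace (LinearMap.funLeft k k ⇑(faceMonomialPerm he i)⁻¹) μ) := by
  have hinj := injective_mkₐ_comp_faceMonomialSum (k := k) (Δ := Δ) i
  rw [pieceDim, ← ker_mkₐ_toLinearMap, map_inf_comap_ker_eq_map_ker (range_faceMonomialSum_le i)
    (homogeneousSubmodule_le_range_faceMonomialSum_sup i) ?_ ?_ hinj, Module.End.eigenspace_def]
  · exact (Submodule.equivMapOfInjective _ hinj _).finrank_eq.symm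
  · rw [ker_mkₐ_toLinearMap]
    intro f hf
    exact sub_mem (rename_mem_SRIdeal he hf) (Submodule.smul_mem _ μ hf)
  · rw [LinearMap.sub_comp, LinearMap.comp_sub, rename_comp_faceMonomialSum he,
      LinearMap.smul_comp, LinearMap.comp_smul, LinearMap.id_comp]
    rfl

variable (k Δ) in
theorem pieceDimTot_eq_card (i : ℕ) : pieceDimTot k (SRIdeal k Δ) i = #(faceMonomials Δ i) := by
  rw [pieceDimTot, map_eq_range_comp_of_le_sup_ker (range_faceMonomialSum_le i)
    (homogeneousSubmodule_le_range_faceMonomialSum_sup i),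
    LinearMap.finrank_range_of_inj (injective_mkₐ_comp_faceMonomialSum i),
    Module.finrank_fintype_fun_eq_card, Fintype.card_coe]

theorem natCast_mul_pieceDim {p : ℕ} (hep : e ^ p = 1) {i : ℕ} {μ : k} (hμ : μ ^ p = 1)
    (hp : (p : k) ≠ 0) :
    (p : k) * pieceDim k (SRIdeal k Δ) e i μ =
      ∑ l ∈ range p, μ⁻¹ ^ l * #{U | (faceMonomialPerm he i ^ l) U = U} := by
  have hT : LinearMap.funLeft k k ⇑(faceMonomialPerm he i)⁻¹ ^ p = 1 := by
    rw [funLeft_perm_pow, inv_pow, faceMonomialPerm_pow_eq_one he hep, inv_one]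
    rfl
  rw [pieceDim_eq_finrank_eigenspace he, natCast_mul_finrank_eigenspace hT hμ hp]
  refine sum_congr rfl fun l _ => ?_
  rw [funLeft_perm_pow, trace_funLeft_perm, inv_pow (faceMonomialPerm he i),
    filter_congr fun U _ => Equiv.Perm.inv_eq_iff_eq.trans eq_comm]

theorem mul_pieceDim_eq_pieceDimTot [CharZero k] {p : ℕ} (hfree : FreeActionBy Δ e p)
    (hp : 0 < p) {i : ℕ} (hi : 1 ≤ i) {μ : k} (hμ : μ ^ p = 1) :
    p * pieceDim k (SRIdeal k Δ) e i μ = pieceDimTot k (SRIdeal k Δ) i := by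
  apply Nat.cast_injective (R := k)
  rw [Nat.cast_mul, natCast_mul_pieceDim hfree.2.1 hfree.1 hμ (Nat.cast_ne_zero.mpr hp.ne'),
    pieceDimTot_eq_card, sum_eq_single_of_mem 0 (mem_range.mpr hp)]
  · simp
  · intro l hl hl0
    rw [filter_false_of_mem fun U _ => faceMonomialPerm_pow_apply_ne hfree hi
      (Nat.pos_of_ne_zero hl0) (mem_range.mp hl) U, card_empty, Nat.cast_zero, mul_zero]

variable (Δ) in
theorem faceMonomials_zero : faceMonomials Δ 0 = {0} := by
  ext U
  rw [mem_faceMonomials, Finsupp.degree_eq_zero_iff, mem_singleton]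
  refine ⟨And.right, ?_⟩
  rintro rfl
  exact ⟨by simpa using Δ.empty_mem, rfl⟩

theorem funLeft_faceMonomialPerm_zero :
    LinearMap.funLeft k k ⇑(faceMonomialPerm he 0)⁻¹ = 1 := by
  have : Subsingleton (faceMonomials Δ 0) := by
    rw [faceMonomials_zero]
    infer_instance
  rw [Subsingleton.elim (faceMonomialPerm he 0) 1, inv_one]
  rfl

include he in
theorem pieceDim_zero_one : pieceDim k (SRIdeal k Δ) e 0 1 = 1 := by
  rw [pieceDim_eq_finrank_eigenspace he, funLeft_faceMonomialPerm_zero, Module.End.eigenspace_def,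
    one_smul, sub_self, LinearMap.ker_zero, finrank_top, Module.finrank_fintype_fun_eq_card,
    Fintype.card_coe, faceMonomials_zero, card_singleton]

include he in
theorem pieceDim_zero_of_ne_one {μ : k} (hμ : μ ≠ 1) : pieceDim k (SRIdeal k Δ) e 0 μ = 0 := by
  rw [pieceDim_eq_finrank_eigenspace he, funLeft_faceMonomialPerm_zero, Submodule.finrank_eq_zero,
    eq_bot_iff]
  intro c hc
  rw [Module.End.mem_eigenspace_iff, Module.End.one_apply, eq_comm, ← sub_eq_zero] at hc
  nth_rw 2 [← one_smul k c] at hc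
  rw [← sub_smul] at hc
  exact (smul_eq_zero.mp hc).resolve_left (sub_ne_zero.mpr hμ)

end StanleyReisner

theorem stmt2_graded_piece_dims_general
    (n p : ℕ) (k : Type) [Field k] [Algebra ℂ k]
    (ζ : k) (hζ : IsPrimitiveRoot ζ p)
    (Δ : SC n) (e : Equiv.Perm (Fin n)) (hfree : FreeActionBy Δ e p) :
    (∀ i : ℕ, 1 ≤ i → ∀ j < p,
        p * pieceDim k (SRIdeal k Δ) e i (ζ ^ j) = pieceDimTot k (SRIdeal k Δ) i) ∧
    pieceDim k (SRIdeal k Δ) e 0 (ζ ^ 0) = 1 ∧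
    (∀ j : ℕ, 0 < j → j < p → pieceDim k (SRIdeal k Δ) e 0 (ζ ^ j) = 0) := by
  have : CharZero k := charZero_of_injective_algebraMap (algebraMap ℂ k).injective
  refine ⟨fun i hi j hj => ?_, ?_, fun j hj0 hjp => ?_⟩
  · refine mul_pieceDim_eq_pieceDimTot hfree (j.zero_le.trans_lt hj) hi ?_
    rw [pow_right_comm, hζ.pow_eq_one, one_pow]
  · rw [pow_zero, pieceDim_zero_one hfree.2.1]
  · exact pieceDim_zero_of_ne_one hfree.2.1 (hζ.pow_ne_one_of_pos_of_lt hj0.ne' hjp)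

/-- if `Δ` admits a free action of `ℤ/pℤ` then all eigenspaces of the
generator acting on `k[Δ]_i` for `i ≥ 1` have the same dimension `(1/p) dim_k k[Δ]_i`,
while `dim_k k[Δ]_0^0 = 1` and `dim_k k[Δ]_0^j = 0` for `0 < j < p`. -/
theorem stmt2_graded_piece_dims
    (n p : ℕ) (hp : p.Prime) (k : Type) [Field k] [Algebra ℂ k]
    (ζ : k) (hζ : IsPrimitiveRoot ζ p)
    (Δ : SC n) (e : Equiv.Perm (Fin n)) (hfree : FreeActionBy Δ e p) :
    (∀ i : ℕ, 1 ≤ i → ∀ j < p,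
        p * pieceDim k (SRIdeal k Δ) e i (ζ ^ j) = pieceDimTot k (SRIdeal k Δ) i) ∧
    pieceDim k (SRIdeal k Δ) e 0 (ζ ^ 0) = 1 ∧
    (∀ j : ℕ, 0 < j → j < p → pieceDim k (SRIdeal k Δ) e 0 (ζ ^ j) = 0) :=
  stmt2_graded_piece_dims_general n p k ζ hζ Δ e hfree

end GroupActionsSR
end

section
/- Let Δ be a (d−1)-dimensional simplicial complex admitting a very free action by G=ℤ/pℤ over a field k extending ℂ, and let δ_1,…,δ_d be integers with 0 ≤ δ_i ≤ p−1. Then there exists a linear system of parameters Θ = (θ_1,…,θ_d) for k[Δ] such that θ_i ∈ A_1^{δ_i} for i = 1,…,d, i.e., each θ_i is a linear form with g·θ_i = ζ^{δ_i} θ_i. -/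
/-!
Common framework: abstract simplicial complexes on `Fin n`, their `f`- and `h`-vectors,
(relative) simplicial cohomology with field coefficients, free actions of `ℤ/pℤ` given by a
permutation `e`, eigen-Betti numbers, Stanley--Reisner ideals and graded/equivariant pieces of
Artinian reductions.
-/

namespace GroupActionsSR

open scoped BigOperators

variable {n : ℕ}

/-!
A face `σ` sees a linear form only through its coefficients on the vertices of `σ`. Since the
action is very free, the `e`-orbit of a vertex `v ∈ σ` meets `σ` only in `v`, so the orbit sum
`∑_{l<p} μ^{-l} x_{e^l v}` is a `μ`-eigenform restricting to `x_v` on `σ`: every eigenspace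
`A_1^μ` restricts onto `k^σ`. Over the infinite field `k`, a generic element of `A_1^{ζ^{δ_j}}`
therefore raises the rank of the restriction of `θ_1, …, θ_{j-1}` to every face where it is not
yet full, and after `d ≥ |σ|` steps `Θ` restricts onto `k^σ` for every face `σ`. This is the
Kind–Kleinschmidt condition, under which every monomial of degree `> d` vanishes modulo
`I_Δ + (Θ)`.
-/

section LinearAlgebra

variable {k M : Type*} [Field k] [AddCommGroup M] [Module k M]

theorem exists_mem_forall_notMem_of_not_le [Infinite k] {ι : Type*} [Finite ι]
    (E : Submodule k M) (V : ι → Submodule k M) (h : ∀ i, ¬ E ≤ V i) :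
    ∃ x ∈ E, ∀ i, x ∉ V i := by
  by_contra! hcover
  obtain ⟨i, hi⟩ := Subspace.exists_eq_top_of_iUnion_eq_univ
    (p := fun i => (V i).comap E.subtype) <| Set.eq_univ_of_forall fun x => by
      obtain ⟨i, hi⟩ := hcover x x.2
      exact Set.mem_iUnion.mpr ⟨i, hi⟩
  exact h i (Submodule.comap_subtype_eq_top.mp hi)

variable [Infinite k] {ι : Type*} [Finite ι] {N : ι → Type*} [∀ i, AddCommGroup (N i)]
  [∀ i, Module k (N i)] [∀ i, FiniteDimensional k (N i)]

theorem exists_tuple_min_le_finrank_span (f : ∀ i, M →ₗ[k] N i) :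
    ∀ (j : ℕ) (E : Fin j → Submodule k M), (∀ i l, (E l).map (f i) = ⊤) →
      ∃ θ : Fin j → M, (∀ l, θ l ∈ E l) ∧
        ∀ i, min j (Module.finrank k (N i)) ≤
          Module.finrank k (Submodule.span k (Set.range (f i ∘ θ)))
  | 0, _, _ => ⟨Fin.elim0, fun l => l.elim0, fun i => by simp⟩
  | j + 1, E, hE => by
    obtain ⟨θ, hθE, hθ⟩ := exists_tuple_min_le_finrank_span f j (E ∘ Fin.succ)
      fun i l => hE i l.succ
    have hproper : ∀ i : {i // j < Module.finrank k (N i)},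
        ¬ E 0 ≤ (Submodule.span k (Set.range (f i ∘ θ))).comap (f i) := fun i hle => by
      have htop : Submodule.span k (Set.range (f i ∘ θ)) = ⊤ :=
        eq_top_iff.mpr <| hE i 0 ▸ Submodule.map_le_iff_le_comap.mpr hle
      have := finrank_range_le_card (R := k) (f i ∘ θ)
      rw [Set.finrank, htop, finrank_top, Fintype.card_fin] at this
      exact absurd i.2 this.not_gt
    obtain ⟨x, hxE, hx⟩ := exists_mem_forall_notMem_of_not_le (E 0) _ hproper
    refine ⟨Fin.cons x θ, Fin.cases hxE hθE, fun i => ?_⟩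
    have hθi := hθ i
    rw [Fin.comp_cons, Fin.range_cons, Submodule.span_insert, sup_comm]
    set S := Submodule.span k (Set.range (f i ∘ θ))
    by_cases hij : j < Module.finrank k (N i)
    · have hlt : S < S ⊔ k ∙ f i x := Submodule.lt_sup_iff_notMem.mpr (hx ⟨i, hij⟩)
      have := Submodule.finrank_lt_finrank_of_lt hlt
      omega
    · have := Submodule.finrank_mono (le_sup_left : S ≤ S ⊔ k ∙ f i x)
      omega

end LinearAlgebra

section FaceCriterion

open MvPolynomial Submodule

variable {k : Type*} [Field k] {d : ℕ}

/-- The Kind–Kleinschmidt condition: the restriction of `Θ` to every face `σ` spans the linear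
forms of `k[σ]`. -/
def SpansFaceVariables (Δ : SC n) (Θ : Fin d → MvPolynomial (Fin n) k) : Prop :=
  ∀ σ ∈ Δ.faces, ∀ v ∈ σ, X v ∈ span k (Set.range Θ ∪ X '' (↑σ)ᶜ)

variable (k) in
theorem monomial_mem_SRIdeal {Δ : SC n} {U : Fin n →₀ ℕ} (h : U.support ∉ Δ.faces) :
    monomial U (1 : k) ∈ SRIdeal k Δ := by
  obtain ⟨c, hc⟩ : (∏ i ∈ U.support, X i : MvPolynomial (Fin n) k) ∣ monomial U 1 := by
    rw [monomial_eq, C_1, one_mul, Finsupp.prod]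
    exact Finset.prod_dvd_prod_of_dvd _ _ fun i hi =>
      dvd_pow_self (X i) (Finsupp.mem_support_iff.mp hi)
  rw [hc]
  exact Ideal.mul_mem_right _ _ (Ideal.subset_span ⟨U.support, h, rfl⟩)

theorem support_add_single_of_notMem {α M : Type*} [DecidableEq α] [AddZeroClass M]
    {U : α →₀ M} {w : α} {b : M} (hb : b ≠ 0) (hw : w ∉ U.support) :
    (U + Finsupp.single w b).support = insert w U.support := by
  rw [Finsupp.support_add_eq (by simpa [Finsupp.support_single _ hb] using hw),
    Finsupp.support_single _ hb, Finset.union_comm, Finset.insert_eq]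

/-- If `supp U` is a face, some variable `x_v` occurs squared; rewriting one factor `x_v` through
`Θ` and the variables off the face leaves terms in `(Θ)` and monomials of the same degree with
strictly larger support. -/
theorem monomial_mem_of_degree_gt {Δ : SC n} (hdim : ∀ σ ∈ Δ.faces, σ.card ≤ d)
    {Θ : Fin d → MvPolynomial (Fin n) k} (hΘ : SpansFaceVariables Δ Θ)
    (U : Fin n →₀ ℕ) (hU : d < U.degree) :
    monomial U (1 : k) ∈ SRIdeal k Δ ⊔ Ideal.span (Set.range Θ) := by
  classical
  set J := SRIdeal k Δ ⊔ Ideal.span (Set.range Θ)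
  by_cases hface : U.support ∈ Δ.faces
  case neg => exact Ideal.mem_sup_left (monomial_mem_SRIdeal k hface)
  obtain ⟨v, hv, hv2⟩ : ∃ v ∈ U.support, 1 < U v := by
    refine Finset.exists_lt_of_sum_lt ?_
    have := hdim _ hface
    rw [Finsupp.degree_apply] at hU
    simp only [Finset.sum_const, smul_eq_mul, mul_one]
    omega
  set U' := U - Finsupp.single v 1
  have hU' : U = U' + Finsupp.single v 1 :=
    (tsub_add_cancel_of_le (Finsupp.single_le_iff.mpr hv2.le)).symm
  have hsupp : U'.support = U.support := by
    ext w
    simp only [U', Finsupp.mem_support_iff, Finsupp.coe_tsub, Pi.sub_apply,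
      Finsupp.single_apply]
    split_ifs with h <;> [subst h; skip] <;> omega
  have hdeg : U'.degree + 1 = U.degree := by rw [hU', map_add, Finsupp.degree_single]
  suffices ∀ f ∈ span k (Set.range Θ ∪ X '' (↑U.support)ᶜ), monomial U' 1 * f ∈ J by
    rw [hU', monomial_add_single, pow_one]
    exact this _ (hΘ _ hface v hv)
  intro f hf
  induction hf using Submodule.span_induction with
  | mem f hf =>
    rcases hf with ⟨i, rfl⟩ | ⟨w, hw, rfl⟩
    · exact Ideal.mul_mem_left _ _ (Ideal.mem_sup_right (Ideal.subset_span ⟨i, rfl⟩))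
    · rw [← pow_one (X w), ← monomial_add_single]
      have hw' : w ∉ U'.support := hsupp ▸ hw
      have hsupp' := support_add_single_of_notMem one_ne_zero hw'
      exact monomial_mem_of_degree_gt hdim hΘ _ (by rw [map_add, Finsupp.degree_single]; omega)
  | zero => simp
  | add f g _ _ hf hg => rw [mul_add]; exact J.add_mem hf hg
  | smul c f _ hf => rw [mul_smul_comm]; exact J.smul_of_tower_mem c hf
termination_by n - U.support.card
decreasing_by
  rw [hsupp', Finset.card_insert_of_notMem hw', hsupp]
  have := Finset.card_le_univ (insert w U'.support)
  rw [Finset.card_insert_of_notMem hw', Fintype.card_fin, hsupp] at this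
  omega

theorem finiteDimensional_quotient_of_spansFaceVariables {Δ : SC n}
    (hdim : ∀ σ ∈ Δ.faces, σ.card ≤ d) {Θ : Fin d → MvPolynomial (Fin n) k}
    (hΘ : SpansFaceVariables Δ Θ) :
    FiniteDimensional k (MvPolynomial (Fin n) k ⧸ (SRIdeal k Δ ⊔ Ideal.span (Set.range Θ))) := by
  set mk := Ideal.Quotient.mkₐ k (SRIdeal k Δ ⊔ Ideal.span (Set.range Θ))
  refine ⟨fg_def.mpr ⟨(fun U => mk (monomial U 1)) '' {U | U.degree ≤ d},
    (Finsupp.finite_of_degree_le d).image _, eq_top_iff.mpr fun x _ => ?_⟩⟩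
  obtain ⟨f, rfl⟩ := Ideal.Quotient.mkₐ_surjective k _ x
  rw [← support_sum_monomial_coeff f, map_sum]
  refine sum_mem fun U _ => ?_
  rw [← mul_one (coeff U f), ← smul_eq_mul, ← smul_monomial, map_smul]
  refine smul_mem _ _ ?_
  by_cases hU : U.degree ≤ d
  · exact subset_span ⟨U, hU, rfl⟩
  · rw [Ideal.Quotient.mkₐ_eq_mk, Ideal.Quotient.eq_zero_iff_mem.mpr
      (monomial_mem_of_degree_gt hdim hΘ U (not_le.mp hU))]
    exact zero_mem _

end FaceCriterion

section FaceCoefficients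

open MvPolynomial Submodule

variable {k : Type*} [Field k]

/-- On linear forms, restriction to the face `σ`. -/
noncomputable def faceCoeffs (σ : Finset (Fin n)) : MvPolynomial (Fin n) k →ₗ[k] (σ → k) :=
  LinearMap.pi fun u => lcoeff k (Finsupp.single (u : Fin n) 1)

theorem faceCoeffs_apply (σ : Finset (Fin n)) (f : MvPolynomial (Fin n) k) (u : σ) :
    faceCoeffs σ f u = coeff (Finsupp.single (u : Fin n) 1) f := rfl

theorem faceCoeffs_X_apply (σ : Finset (Fin n)) (w : Fin n) (u : σ) :
    faceCoeffs σ (X w : MvPolynomial (Fin n) k) u = if w = u then 1 else 0 := by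
  classical
  simp [faceCoeffs_apply, coeff_X, Finsupp.single_left_inj one_ne_zero]

theorem faceCoeffs_X_of_mem {σ : Finset (Fin n)} {w : Fin n} (hw : w ∈ σ) :
    faceCoeffs σ (X w : MvPolynomial (Fin n) k) = Pi.single ⟨w, hw⟩ 1 := by
  ext u
  simp [faceCoeffs_X_apply, Pi.single_apply, Subtype.ext_iff, eq_comm]

theorem faceCoeffs_X_of_notMem {σ : Finset (Fin n)} {w : Fin n} (hw : w ∉ σ) :
    faceCoeffs σ (X w : MvPolynomial (Fin n) k) = 0 := by
  ext u
  simp [faceCoeffs_X_apply, show w ≠ u from fun h => hw (h ▸ u.2)]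

theorem mem_span_X_compl_of_faceCoeffs_eq_zero {σ : Finset (Fin n)}
    {x : MvPolynomial (Fin n) k} (hx : x ∈ span k (Set.range X)) (h0 : faceCoeffs σ x = 0) :
    x ∈ span k (X '' (↑σ)ᶜ) := by
  obtain ⟨c, rfl⟩ := (mem_span_range_iff_exists_fun k).mp hx
  refine sum_mem fun w _ => ?_
  by_cases hw : w ∈ σ
  · have hcw : c w = 0 := by
      simpa [faceCoeffs_X_apply] using congrFun h0 ⟨w, hw⟩
    simp [hcw]
  · exact smul_mem _ _ (subset_span ⟨w, hw, rfl⟩)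

theorem spansFaceVariables_of_span_faceCoeffs_eq_top {d : ℕ} {Δ : SC n}
    {Θ : Fin d → MvPolynomial (Fin n) k} (hΘ : ∀ i, Θ i ∈ homogeneousSubmodule (Fin n) k 1)
    (h : ∀ σ ∈ Δ.faces, span k (Set.range (faceCoeffs σ ∘ Θ)) = ⊤) :
    SpansFaceVariables Δ Θ := by
  intro σ hσ v hv
  obtain ⟨t, ht, hft⟩ : Pi.single ⟨v, hv⟩ 1 ∈ (span k (Set.range Θ)).map (faceCoeffs σ) := by
    rw [map_span, ← Set.range_comp, h σ hσ]
    exact mem_top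
  have hΘX : span k (Set.range Θ) ≤ span k (Set.range X) :=
    homogeneousSubmodule_one_eq_span_X (σ := Fin n) (R := k) ▸
      span_le.mpr (Set.range_subset_iff.mpr hΘ)
  have hrest : X v - t ∈ span k (X '' (↑σ)ᶜ) :=
    mem_span_X_compl_of_faceCoeffs_eq_zero (sub_mem (subset_span ⟨v, rfl⟩) (hΘX ht))
      (by rw [map_sub, hft, faceCoeffs_X_of_mem hv, sub_self])
  rw [span_union, ← add_sub_cancel t (X v)]
  exact add_mem (mem_sup_left ht) (mem_sup_right hrest)

end FaceCoefficients

section EigenForms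

open MvPolynomial Submodule

variable {k : Type*} [Field k] {p : ℕ} {e : Equiv.Perm (Fin n)}

/-- `A_1^μ`: the statement's `A_1^m` is `A_1^{ζ^m}`. -/
noncomputable def linearEigenforms (e : Equiv.Perm (Fin n)) (μ : k) :
    Submodule k (MvPolynomial (Fin n) k) :=
  homogeneousSubmodule (Fin n) k 1 ⊓ LinearMap.ker ((rename ⇑e).toLinearMap - μ • LinearMap.id)

theorem mem_linearEigenforms {μ : k} {θ : MvPolynomial (Fin n) k} :
    θ ∈ linearEigenforms e μ ↔ θ ∈ homogeneousSubmodule (Fin n) k 1 ∧ rename ⇑e θ = μ • θ := by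
  simp [linearEigenforms, sub_eq_zero]

noncomputable def orbitForm (p : ℕ) (e : Equiv.Perm (Fin n)) (c : k) (v : Fin n) :
    MvPolynomial (Fin n) k :=
  ∑ l ∈ Finset.range p, c ^ l • X ((e ^ l) v)

theorem rename_orbitForm {c : k} (hc : c ^ p = 1) (he : e ^ p = 1) (v : Fin n) :
    rename ⇑e (orbitForm p e c v) = c⁻¹ • orbitForm p e c v := by
  rcases Nat.eq_zero_or_pos p with rfl | hp
  · simp [orbitForm]
  have hc0 : c ≠ 0 := by rintro rfl; simp [zero_pow hp.ne'] at hc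
  set g : ℕ → MvPolynomial (Fin n) k := fun l => c ^ l • X ((e ^ l) v)
  have hshift : ∀ l, c • rename ⇑e (g l) = g (l + 1) := fun l => by
    simp [g, smul_smul, pow_succ', Equiv.Perm.mul_apply]
  have hperiod : g p = g 0 := by simp [g, hc, he]
  have hsum := Finset.sum_range_succ' g p
  rw [Finset.sum_range_succ, hperiod, add_left_inj] at hsum
  rw [eq_inv_smul_iff₀ hc0, orbitForm, map_sum, Finset.smul_sum]
  exact (Finset.sum_congr rfl fun l _ => hshift l).trans hsum.symm

theorem orbitForm_mem_linearEigenforms {c : k} (hc : c ^ p = 1) (he : e ^ p = 1) (v : Fin n) :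
    orbitForm p e c v ∈ linearEigenforms e c⁻¹ :=
  mem_linearEigenforms.mpr ⟨sum_mem fun _ _ => smul_mem _ _
    ((mem_homogeneousSubmodule _ _).mpr (isHomogeneous_X k _)), rename_orbitForm hc he v⟩

/-- Otherwise `σ` itself would lie in `st {v} ∩ st {e^l v}`. -/
theorem VeryFreeActionBy.pow_apply_notMem {Δ : SC n} (hvf : VeryFreeActionBy Δ e p)
    {σ : Finset (Fin n)} (hσ : σ ∈ Δ.faces) {v : Fin n} (hv : v ∈ σ) {l : ℕ} (hl0 : 0 < l)
    (hlp : l < p) : (e ^ l) v ∉ σ := by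
  intro hlv
  have hstar : ∀ w ∈ σ, σ ∈ starF Δ {w} := fun w hw =>
    Finset.mem_filter.mpr ⟨hσ, by rwa [Finset.union_eq_right.mpr (by simpa using hw)]⟩
  have := hvf.2.2 {v} (Δ.down_closed σ hσ _ (by simpa using hv)) (by simp) l hl0 hlp σ
    (hstar v hv) (by rw [Finset.image_singleton]; exact hstar _ hlv)
  simp [this] at hv

theorem faceCoeffs_orbitForm {Δ : SC n} (hvf : VeryFreeActionBy Δ e p) (hp : 0 < p)
    {σ : Finset (Fin n)} (hσ : σ ∈ Δ.faces) {v : Fin n} (hv : v ∈ σ) (c : k) :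
    faceCoeffs σ (orbitForm p e c v) = Pi.single ⟨v, hv⟩ 1 := by
  rw [orbitForm, map_sum, Finset.sum_eq_single_of_mem 0 (Finset.mem_range.mpr hp)]
  · simp [faceCoeffs_X_of_mem hv]
  · intro l hl hl0
    rw [map_smul, faceCoeffs_X_of_notMem (hvf.pow_apply_notMem hσ hv (Nat.pos_of_ne_zero hl0)
      (Finset.mem_range.mp hl)), smul_zero]

theorem map_faceCoeffs_linearEigenforms {Δ : SC n} (hvf : VeryFreeActionBy Δ e p) (hp : 0 < p)
    {μ : k} (hμ : μ ^ p = 1) {σ : Finset (Fin n)} (hσ : σ ∈ Δ.faces) :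
    (linearEigenforms e μ).map (faceCoeffs σ) = ⊤ := by
  rw [eq_top_iff, ← (Pi.basisFun k σ).span_eq, span_le]
  rintro _ ⟨⟨v, hv⟩, rfl⟩
  refine ⟨orbitForm p e μ⁻¹ v, ?_, ?_⟩
  · have := orbitForm_mem_linearEigenforms (c := μ⁻¹) (by rw [inv_pow, hμ, inv_one]) hvf.1 v
    rwa [inv_inv] at this
  · rw [Pi.basisFun_apply]; exact faceCoeffs_orbitForm hvf hp hσ hv μ⁻¹

end EigenForms

theorem stmt3_exists_graded_lsop_general
    (n d p : ℕ) (hp : p.Prime) (k : Type) [Field k] [Algebra ℂ k]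
    (ζ : k) (hζ : IsPrimitiveRoot ζ p)
    (Δ : SC n) (hdim : Δ.hasDim d)
    (e : Equiv.Perm (Fin n)) (hvf : VeryFreeActionBy Δ e p)
    (δ : Fin d → ℕ) :
    ∃ Θ : Fin d → MvPolynomial (Fin n) k,
      (∀ i, Θ i ∈ MvPolynomial.homogeneousSubmodule (Fin n) k 1) ∧
      (∀ i, MvPolynomial.rename ⇑e (Θ i) = ζ ^ (δ i) • Θ i) ∧
      FiniteDimensional k
        (MvPolynomial (Fin n) k ⧸ (SRIdeal k Δ ⊔ Ideal.span (Set.range Θ))) := by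
  have : Infinite k := Infinite.of_injective _ (algebraMap ℂ k).injective
  obtain ⟨Θ, hΘE, hΘ⟩ := exists_tuple_min_le_finrank_span
    (fun σ : Δ.faces => faceCoeffs (k := k) σ.1) d (fun i => linearEigenforms e (ζ ^ δ i))
    fun σ i => map_faceCoeffs_linearEigenforms hvf hp.pos
      (μ := ζ ^ δ i) (by rw [← pow_mul, mul_comm, pow_mul, hζ.pow_eq_one, one_pow]) σ.2
  have hlin i := (mem_linearEigenforms.mp (hΘE i)).1
  refine ⟨Θ, hlin, fun i => (mem_linearEigenforms.mp (hΘE i)).2,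
    finiteDimensional_quotient_of_spansFaceVariables hdim.1
      (spansFaceVariables_of_span_faceCoeffs_eq_top hlin fun σ hσ => ?_)⟩
  have hrank := hΘ ⟨σ, hσ⟩
  rw [Module.finrank_fintype_fun_eq_card, Fintype.card_coe, min_eq_right (hdim.1 σ hσ)] at hrank
  refine Submodule.eq_top_of_finrank_eq (le_antisymm (Submodule.finrank_le _) ?_)
  rwa [Module.finrank_fintype_fun_eq_card, Fintype.card_coe]

/-- if the `(d-1)`-dimensional complex `Δ` admits a very free action of
`ℤ/pℤ` and `0 ≤ δ_i ≤ p-1` for `i = 1, …, d`, then there is a linear system of parameters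
`Θ = (θ_1, …, θ_d)` for `k[Δ]` with `θ_i ∈ A_1^{δ_i}`, i.e. `g · θ_i = ζ^{δ_i} θ_i`. -/
theorem stmt3_exists_graded_lsop
    (n d p : ℕ) (hp : p.Prime) (k : Type) [Field k] [Algebra ℂ k]
    (ζ : k) (hζ : IsPrimitiveRoot ζ p)
    (Δ : SC n) (hdim : Δ.hasDim d)
    (e : Equiv.Perm (Fin n)) (hvf : VeryFreeActionBy Δ e p)
    (δ : Fin d → ℕ) (hδ : ∀ i, δ i ≤ p - 1) :
    ∃ Θ : Fin d → MvPolynomial (Fin n) k,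
      (∀ i, Θ i ∈ MvPolynomial.homogeneousSubmodule (Fin n) k 1) ∧
      (∀ i, MvPolynomial.rename ⇑e (Θ i) = ζ ^ (δ i) • Θ i) ∧
      FiniteDimensional k
        (MvPolynomial (Fin n) k ⧸ (SRIdeal k Δ ⊔ Ideal.span (Set.range Θ))) :=
  stmt3_exists_graded_lsop_general n d p hp k ζ hζ Δ hdim e hvf δ

end GroupActionsSR
end
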